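/- There is no function σ : ℝ³ → ℝ that is (Fréchet) differentiable at the point (1/3, 1/3, 1/3) and satisfies, for all λ in some open neighborhood of 1/3 in ℝ, the three identities σ(λ, (1−λ)/2, (1−λ)/2) = λ, σ((1−λ)/2, λ, (1−λ)/2) = λ, and σ((1−λ)/2, (1−λ)/2, λ) = λ. -/

import Mathlib

/-!
Differentiating `σ` along the three lines through `(1/3, 1/3, 1/3)` on which it is prescribed gives
`dσ(dᵢ) = 1` for the directions `d₀ = (1, -1/2, -1/2)`, `d₁ = (-1/2, 1, -1/2)`, `d₂ = (-1/2, -1/2, 1)`.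
These directions sum to zero, so linearity of `dσ` would force `0 = 3`.
-/

open Filter Topology Finset

theorem fderiv_apply_eq_one_of_eventually_line {E : Type*} [NormedAddCommGroup E]
    [NormedSpace ℝ E] {σ : E → ℝ} {x v : E} {c : ℝ} (hσ : DifferentiableAt ℝ σ x)
    (h : ∀ᶠ s in 𝓝 0, σ (x + s • v) = s + c) : fderiv ℝ σ x v = 1 :=
  (hσ.hasFDerivAt.hasLineDerivAt v).unique <|
    ((hasDerivAt_id (0 : ℝ)).add_const c).congr_of_eventuallyEq h

namespace AxisymmetricSigma

noncomputable def center : Fin 3 → ℝ := ![1 / 3, 1 / 3, 1 / 3]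

noncomputable def axisDir (i : Fin 3) : Fin 3 → ℝ := fun j => if j = i then 1 else -1 / 2

theorem sum_axisDir : ∑ i, axisDir i = 0 := by
  ext j
  fin_cases j <;> simp [axisDir, Fin.sum_univ_three] <;> norm_num

theorem center_add_smul_axisDir (s : ℝ) (i : Fin 3) :
    center + s • axisDir i = fun j => if j = i then s + 1 / 3 else (1 - (s + 1 / 3)) / 2 := by
  ext j
  have hj : center j = 1 / 3 := by fin_cases j <;> rfl
  simp only [Pi.add_apply, Pi.smul_apply, axisDir, hj, smul_eq_mul]
  split_ifs <;> ring

end AxisymmetricSigma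

open AxisymmetricSigma in
theorem no_differentiable_axisymmetric_sigma :
    ¬ ∃ σ : (Fin 3 → ℝ) → ℝ,
      DifferentiableAt ℝ σ ![(1 : ℝ) / 3, 1 / 3, 1 / 3] ∧
      ∃ U : Set ℝ, IsOpen U ∧ (1 : ℝ) / 3 ∈ U ∧
        ∀ l ∈ U,
          σ ![l, (1 - l) / 2, (1 - l) / 2] = l ∧
          σ ![(1 - l) / 2, l, (1 - l) / 2] = l ∧
          σ ![(1 - l) / 2, (1 - l) / 2, l] = l := by
  rintro ⟨σ, hσ, U, hU, hU₀, hσU⟩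
  have hnear : ∀ᶠ s in 𝓝 (0 : ℝ), s + 1 / 3 ∈ U :=
    ((continuous_add_const _).tendsto' 0 _ (zero_add _)).eventually (hU.mem_nhds hU₀)
  have hline (i : Fin 3) : ∀ᶠ s in 𝓝 (0 : ℝ), σ (center + s • axisDir i) = s + 1 / 3 := by
    filter_upwards [hnear] with s hs
    obtain ⟨h₀, h₁, h₂⟩ := hσU _ hs
    rw [center_add_smul_axisDir]
    fin_cases i
    · convert h₀ using 2; ext j; fin_cases j <;> rfl
    · convert h₁ using 2; ext j; fin_cases j <;> rfl
    · convert h₂ using 2; ext j; fin_cases j <;> rfl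
  have hd (i : Fin 3) : fderiv ℝ σ center (axisDir i) = 1 :=
    fderiv_apply_eq_one_of_eventually_line hσ (hline i)
  have h := map_sum (fderiv ℝ σ center) axisDir univ
  norm_num [sum_axisDir, hd] at h
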